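/- Let γ⁰, γ¹, γ², γ³ be the Dirac matrices in the standard Dirac representation and γ₅ := iγ⁰γ¹γ²γ³, and set σ^{μν} := ½(γ^μγ^ν − γ^νγ^μ). Then for every Ψ ∈ ℂ⁴ and for every Q belonging to the set {𝟙, γ^μ (μ = 0,…,3), γ₅, γ^μγ₅ (μ = 0,…,3), σ^{μν} (μ,ν = 0,…,3)}, the Pauli–Kofink identity holds: ( Ψ̄ Q γ_λ Ψ ) γ^λ Ψ = ( Ψ̄ Q Ψ ) Ψ − ( Ψ̄ Q γ₅ Ψ ) γ₅ Ψ, where the repeated index λ is summed with γ^λ = η^{λμ} γ_μ. -/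

import Mathlib

open scoped BigOperators
open Matrix

noncomputable section

/-- The Dirac matrices γ⁰, γ¹, γ², γ³ in the standard Dirac representation. -/
def γm : Fin 4 → Matrix (Fin 4) (Fin 4) ℂ :=
  ![!![1, 0, 0, 0; 0, 1, 0, 0; 0, 0, -1, 0; 0, 0, 0, -1],
    !![0, 0, 0, 1; 0, 0, 1, 0; 0, -1, 0, 0; -1, 0, 0, 0],
    !![0, 0, 0, -Complex.I; 0, 0, Complex.I, 0; 0, Complex.I, 0, 0; -Complex.I, 0, 0, 0],
    !![0, 0, 1, 0; 0, 0, 0, -1; -1, 0, 0, 0; 0, 1, 0, 0]]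

/-- γ₅ := i γ⁰γ¹γ²γ³. -/
def γ5 : Matrix (Fin 4) (Fin 4) ℂ := Complex.I • (γm 0 * γm 1 * γm 2 * γm 3)

/-- The Minkowski metric diag(1,-1,-1,-1) with complex entries. -/
def ηc (μ ν : Fin 4) : ℂ := if μ = ν then (if μ = 0 then 1 else -1) else 0

/-- The Dirac bilinear Ψ̄ Q Ψ, with Ψ̄ := Ψ†γ⁰. -/
def bil (Q : Matrix (Fin 4) (Fin 4) ℂ) (Ψ : Fin 4 → ℂ) : ℂ :=
  dotProduct (Matrix.vecMul (star Ψ) (γm 0)) (Q.mulVec Ψ)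

/-! Since η is diagonal, the left-hand side is the row vector Ψ̄Q applied to the symmetric tensor
Σ_λ η_λλ (γ^λΨ)(γ^λΨ)ᵀ, and this tensor equals ΨΨᵀ − (γ₅Ψ)(γ₅Ψ)ᵀ: a Fierz identity, which is an
entrywise polynomial identity in the components of Ψ once i² = −1 is used. -/

lemma sum_ηc_smul_eq {M : Type*} [AddCommMonoid M] [Module ℂ M] (l : Fin 4) (f : Fin 4 → M) :
    ∑ μ, ηc l μ • f μ = ηc l l • f l :=
  Fintype.sum_eq_single l fun μ hμ => by simp [ηc, Ne.symm hμ]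

lemma γ5_eq : γ5 = !![0, 0, 1, 0; 0, 0, 0, 1; 1, 0, 0, 0; 0, 1, 0, 0] := by
  ext i j
  fin_cases i <;> fin_cases j <;> simp [γ5, γm]

lemma sum_ηc_smul_vecMulVec_γm (Ψ : Fin 4 → ℂ) :
    ∑ l, ηc l l • vecMulVec (γm l *ᵥ Ψ) (γm l *ᵥ Ψ)
      = vecMulVec Ψ Ψ - vecMulVec (γ5 *ᵥ Ψ) (γ5 *ᵥ Ψ) := by
  ext i j
  fin_cases i <;> fin_cases j <;>
    simp [γ5_eq, γm, ηc, vecMulVec, mulVec, dotProduct, Fin.sum_univ_four] <;>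
    ring_nf <;> simp [Complex.I_sq] <;> ring

lemma sum_ηc_dotProduct_γm_smul (φ Ψ : Fin 4 → ℂ) :
    ∑ l, (ηc l l * (φ ⬝ᵥ γm l *ᵥ Ψ)) • γm l *ᵥ Ψ
      = (φ ⬝ᵥ Ψ) • Ψ - (φ ⬝ᵥ γ5 *ᵥ Ψ) • γ5 *ᵥ Ψ := by
  simpa [vecMul_sub, vecMul_sum, vecMul_smul, vecMul_vecMulVec, mul_smul]
    using congrArg (φ ᵥ* ·) (sum_ηc_smul_vecMulVec_γm Ψ)

lemma bil_eq (Q : Matrix (Fin 4) (Fin 4) ℂ) (Ψ : Fin 4 → ℂ) :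
    bil Q Ψ = (star Ψ ᵥ* γm 0 ᵥ* Q) ⬝ᵥ Ψ :=
  dotProduct_mulVec _ _ _

lemma bil_mul (Q M : Matrix (Fin 4) (Fin 4) ℂ) (Ψ : Fin 4 → ℂ) :
    bil (Q * M) Ψ = (star Ψ ᵥ* γm 0 ᵥ* Q) ⬝ᵥ M *ᵥ Ψ := by
  rw [bil, ← mulVec_mulVec, dotProduct_mulVec]

theorem pauli_kofink_identity_general
    (Ψ : Fin 4 → ℂ) (Q : Matrix (Fin 4) (Fin 4) ℂ) :
    (∑ l, bil (Q * (∑ μ, ηc l μ • γm μ)) Ψ • (γm l).mulVec Ψ)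
      = bil Q Ψ • Ψ - bil (Q * γ5) Ψ • γ5.mulVec Ψ := by
  simp only [bil_mul, sum_ηc_smul_eq, smul_mulVec, dotProduct_smul, smul_eq_mul]
  rw [bil_eq]
  exact sum_ηc_dotProduct_γm_smul _ Ψ

/-- the Pauli–Kofink identity
(Ψ̄ Q γ_λ Ψ) γ^λ Ψ = (Ψ̄QΨ)Ψ − (Ψ̄Qγ₅Ψ)γ₅Ψ, for Q in
{𝟙, γ^μ, γ₅, γ^μγ₅, σ^{μν}}, with γ_λ = η_{λμ}γ^μ. -/
theorem pauli_kofink_identity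
    (Ψ : Fin 4 → ℂ) (Q : Matrix (Fin 4) (Fin 4) ℂ)
    (hQ : Q = 1 ∨ (∃ μ, Q = γm μ) ∨ Q = γ5 ∨ (∃ μ, Q = γm μ * γ5) ∨
      (∃ μ ν, Q = (1 / 2 : ℂ) • (γm μ * γm ν - γm ν * γm μ))) :
    (∑ l, bil (Q * (∑ μ, ηc l μ • γm μ)) Ψ • (γm l).mulVec Ψ)
      = bil Q Ψ • Ψ - bil (Q * γ5) Ψ • γ5.mulVec Ψ :=
  pauli_kofink_identity_general Ψ Q
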